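/- arXiv:2604.03084 — 4 statements merged into one kernel-verified Lean document; each statement's English description precedes it below -/
import Mathlib

section
/- Let σ = (σ₁, σ₂) ∈ ℝ² with σ ≠ 0, write |σ| = √(σ₁² + σ₂²), and let E₁, E₂, e₃, a ∈ ℂ. Suppose that for both values s = 1 and s = −1 the following three equations hold: −s|σ|E₂ + iσ₂(s e₃) + iσ₁ a = 0, s|σ|E₁ − iσ₁(s e₃) + iσ₂ a = 0, and −iσ₂E₁ + iσ₁E₂ + s|σ| a = 0. Then a = 0 and there exists C ∈ ℂ such that E₁ = iσ₁C, E₂ = iσ₂C, and e₃ = |σ|C. -/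
open Complex

/-! The terms of the system that are odd in `s` cancel when the equations for `s = 1` and
`s = -1` are added, leaving `iσ₁a = iσ₂a = 0`, hence `a = 0` since `σ ≠ 0`. With `a = 0` the
equations for `s = 1` say `|σ|E₁ = iσ₁e₃` and `|σ|E₂ = iσ₂e₃`, so `C = e₃ / |σ|` works. -/

lemma Real.sqrt_sq_add_sq_pos {x y : ℝ} (h : ¬(x = 0 ∧ y = 0)) : 0 < √(x ^ 2 + y ^ 2) := by
  apply Real.sqrt_pos.2
  rcases not_and_or.1 h with hx | hy <;> positivity

lemma Complex.eq_zero_of_ofReal_mul_eq_zero {x y : ℝ} (hxy : ¬(x = 0 ∧ y = 0)) {z : ℂ}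
    (hx : (x : ℂ) * z = 0) (hy : (y : ℂ) * z = 0) : z = 0 := by
  by_contra hz
  exact hxy ⟨by simpa [hz] using hx, by simpa [hz] using hy⟩

lemma exists_eq_mul_of_mul_eq_mul {K : Type*} [Field K] {r u v e p q : K} (hr : r ≠ 0)
    (hu : r * u = p * e) (hv : r * v = q * e) :
    ∃ C : K, u = p * C ∧ v = q * C ∧ e = r * C := by
  refine ⟨e / r, ?_, ?_, ?_⟩ <;> field_simp
  · linear_combination hu
  · linear_combination hv

/-- After Fourier transform in the tangential variables, the system
`curl E + ∇α = 0` for exponentially decaying fields forces `a = 0` and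
`(E₁, E₂, e₃) = C (iσ₁, iσ₂, |σ|)` for some constant `C`. -/
theorem fourier_system_solution
    (σ1 σ2 : ℝ) (hσ : ¬(σ1 = 0 ∧ σ2 = 0)) (E1 E2 e3 a : ℂ)
    (h : ∀ s : ℂ, s = 1 ∨ s = -1 →
      (-s * (Real.sqrt (σ1 ^ 2 + σ2 ^ 2) : ℂ) * E2 + I * σ2 * (s * e3) + I * σ1 * a = 0 ∧
       s * (Real.sqrt (σ1 ^ 2 + σ2 ^ 2) : ℂ) * E1 - I * σ1 * (s * e3) + I * σ2 * a = 0 ∧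
       -(I * σ2 * E1) + I * σ1 * E2 + s * (Real.sqrt (σ1 ^ 2 + σ2 ^ 2) : ℂ) * a = 0)) :
    a = 0 ∧ ∃ C : ℂ, E1 = I * σ1 * C ∧ E2 = I * σ2 * C ∧
      e3 = (Real.sqrt (σ1 ^ 2 + σ2 ^ 2) : ℂ) * C := by
  obtain ⟨eq₂, eq₁, -⟩ := h 1 (Or.inl rfl)
  obtain ⟨eq₂', eq₁', -⟩ := h (-1) (Or.inr rfl)
  have hσ1a : (σ1 : ℂ) * a = 0 := by
    linear_combination (-I / 2) * (eq₂ + eq₂') + (σ1 * a : ℂ) * I_sq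
  have hσ2a : (σ2 : ℂ) * a = 0 := by
    linear_combination (-I / 2) * (eq₁ + eq₁') + (σ2 * a : ℂ) * I_sq
  have ha : a = 0 := eq_zero_of_ofReal_mul_eq_zero hσ hσ1a hσ2a
  have hr : (√(σ1 ^ 2 + σ2 ^ 2) : ℂ) ≠ 0 := ofReal_ne_zero.2 (Real.sqrt_sq_add_sq_pos hσ).ne'
  subst ha
  exact ⟨rfl, exists_eq_mul_of_mul_eq_mul hr (by linear_combination eq₁)
    (by linear_combination -eq₂)⟩
end

section
/- Let σ = (σ₁, σ₂) ∈ ℝ² with σ ≠ 0, write |σ| = √(σ₁² + σ₂²), let ε be a 3×3 real symmetric positive definite matrix acting on ℂ³ componentwise through its real entries, and let E₁, E₂, e₃, a ∈ ℂ. Suppose that for both values s = 1 and s = −1 the following three equations hold: −s|σ|E₂ + iσ₂(s e₃) + iσ₁ a = 0, s|σ|E₁ − iσ₁(s e₃) + iσ₂ a = 0, and −iσ₂E₁ + iσ₁E₂ + s|σ| a = 0. Suppose additionally that the third component of ε·(E₁, E₂, e₃) equals the third component of ε·(E₁, E₂, −e₃). Then E₁ = E₂ = e₃ = a = 0. -/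
/-!
The jump condition reads `2 ε₃₃ e₃ = 0`, and `ε₃₃ > 0` by positive definiteness, so `e₃ = 0`.
Subtracting the third equation for `s = -1` from that for `s = 1` gives `2 |σ| a = 0`; with
`a = e₃ = 0` the first two equations for `s = 1` reduce to `|σ| E₂ = 0` and `|σ| E₁ = 0`.
-/

open Complex Matrix

lemma eq_zero_of_mulVec_apply_eq_mulVec_neg {K : Type*} [Field K] [CharZero K]
    {M : Matrix (Fin 3) (Fin 3) K} {i : Fin 3} {x y z : K} (hM : M i 2 ≠ 0)
    (h : (M *ᵥ ![x, y, z]) i = (M *ᵥ ![x, y, -z]) i) : z = 0 := by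
  simp only [mulVec, dotProduct, Fin.sum_univ_three, cons_val_zero, cons_val_one,
    cons_val_two, head_cons, tail_cons] at h
  have hz : M i 2 * z = 0 := by linear_combination h / 2
  exact (mul_eq_zero.1 hz).resolve_left hM

lemma sqrt_sq_add_sq_ne_zero {x y : ℝ} (hxy : ¬(x = 0 ∧ y = 0)) :
    Real.sqrt (x ^ 2 + y ^ 2) ≠ 0 :=
  Real.sqrt_ne_zero'.2 <| by rcases not_and_or.1 hxy with h | h <;> positivity

lemma eq_zero_of_symbol_eqs_of_normal_eq_zero {K : Type*} [Field K] [CharZero K]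
    {r c1 c2 E1 E2 e3 a : K} (hr : r ≠ 0) (he3 : e3 = 0)
    (h : ∀ s : K, s = 1 ∨ s = -1 →
      (-s * r * E2 + c2 * (s * e3) + c1 * a = 0 ∧
       s * r * E1 - c1 * (s * e3) + c2 * a = 0 ∧
       -(c2 * E1) + c1 * E2 + s * r * a = 0)) :
    E1 = 0 ∧ E2 = 0 ∧ a = 0 := by
  subst he3
  obtain ⟨hE2, hE1, ha⟩ := h 1 (Or.inl rfl)
  obtain ⟨-, -, ha'⟩ := h (-1) (Or.inr rfl)
  have ha0 : a = 0 :=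
    (mul_eq_zero.1 (by linear_combination (ha - ha') / 2 : r * a = 0)).resolve_left hr
  subst ha0
  exact ⟨(mul_eq_zero.1 (by linear_combination hE1 : r * E1 = 0)).resolve_left hr,
    (mul_eq_zero.1 (by linear_combination -hE2 : r * E2 = 0)).resolve_left hr, rfl⟩

theorem shapiro_lopatinsky_trivial_solution_general
    (σ1 σ2 : ℝ) (hσ : ¬(σ1 = 0 ∧ σ2 = 0))
    (ε : Matrix (Fin 3) (Fin 3) ℝ) (hpos : ε.PosDef)
    (E1 E2 e3 a : ℂ)
    (h : ∀ s : ℂ, s = 1 ∨ s = -1 →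
      (-s * (Real.sqrt (σ1 ^ 2 + σ2 ^ 2) : ℂ) * E2 + I * σ2 * (s * e3) + I * σ1 * a = 0 ∧
       s * (Real.sqrt (σ1 ^ 2 + σ2 ^ 2) : ℂ) * E1 - I * σ1 * (s * e3) + I * σ2 * a = 0 ∧
       -(I * σ2 * E1) + I * σ1 * E2 + s * (Real.sqrt (σ1 ^ 2 + σ2 ^ 2) : ℂ) * a = 0))
    (hjump : ((ε.map (Complex.ofReal)).mulVec ![E1, E2, e3]) 2 =
             ((ε.map (Complex.ofReal)).mulVec ![E1, E2, -e3]) 2) :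
    E1 = 0 ∧ E2 = 0 ∧ e3 = 0 ∧ a = 0 := by
  have he3 : e3 = 0 :=
    eq_zero_of_mulVec_apply_eq_mulVec_neg (by simpa using hpos.diag_pos.ne') hjump
  obtain ⟨hE1, hE2, ha⟩ := eq_zero_of_symbol_eqs_of_normal_eq_zero
    (ofReal_ne_zero.2 (sqrt_sq_add_sq_ne_zero hσ)) he3 h
  exact ⟨hE1, hE2, he3, ha⟩

/-- Algebraic core of the Shapiro–Lopatinsky condition for the transmission problem:
the Fourier-transformed ODE boundary value problem has only the trivial decaying
solution for every nonzero tangential dual variable `σ`. -/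
theorem shapiro_lopatinsky_trivial_solution
    (σ1 σ2 : ℝ) (hσ : ¬(σ1 = 0 ∧ σ2 = 0))
    (ε : Matrix (Fin 3) (Fin 3) ℝ) (hsymm : ε.IsSymm) (hpos : ε.PosDef)
    (E1 E2 e3 a : ℂ)
    (h : ∀ s : ℂ, s = 1 ∨ s = -1 →
      (-s * (Real.sqrt (σ1 ^ 2 + σ2 ^ 2) : ℂ) * E2 + I * σ2 * (s * e3) + I * σ1 * a = 0 ∧
       s * (Real.sqrt (σ1 ^ 2 + σ2 ^ 2) : ℂ) * E1 - I * σ1 * (s * e3) + I * σ2 * a = 0 ∧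
       -(I * σ2 * E1) + I * σ1 * E2 + s * (Real.sqrt (σ1 ^ 2 + σ2 ^ 2) : ℂ) * a = 0))
    (hjump : ((ε.map (Complex.ofReal)).mulVec ![E1, E2, e3]) 2 =
             ((ε.map (Complex.ofReal)).mulVec ![E1, E2, -e3]) 2) :
    E1 = 0 ∧ E2 = 0 ∧ e3 = 0 ∧ a = 0 :=
  shapiro_lopatinsky_trivial_solution_general σ1 σ2 hσ ε hpos E1 E2 e3 a h hjump
end

section
/- Let U ⊆ ℝ³ be open, ω ∈ ℂ, let E, B, K : U → ℂ³ with E twice differentiable and B, K differentiable on U, let α : U → ℂ be twice differentiable, and let k : U → ℂ. Suppose curl E + ∇α = iωB + K, div B = k, and iωk = −div K on U. Then Δα = 0 on U, i.e., α is harmonic on U. (Classical interior form of the key step (4.15) in the proofs of Theorems 3.2(ii) and 4.3(ii): applying the divergence to the extended equation and using div curl = 0 forces the auxiliary scalar to be harmonic.) -/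
open Complex

/-- Partial derivative `∂ᵢ` of a scalar function on `ℝ³`. -/
noncomputable def pd3 (i : Fin 3) (f : (Fin 3 → ℝ) → ℂ) (x : Fin 3 → ℝ) : ℂ :=
  fderiv ℝ f x (Pi.single i 1)

/-- The curl of a vector field `F : ℝ³ → ℂ³`. -/
noncomputable def vcurl (F : (Fin 3 → ℝ) → Fin 3 → ℂ) (x : Fin 3 → ℝ) : Fin 3 → ℂ :=
  ![pd3 1 (fun y => F y 2) x - pd3 2 (fun y => F y 1) x,
    pd3 2 (fun y => F y 0) x - pd3 0 (fun y => F y 2) x,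
    pd3 0 (fun y => F y 1) x - pd3 1 (fun y => F y 0) x]

/-- The divergence of a vector field `F : ℝ³ → ℂ³`. -/
noncomputable def vdiv (F : (Fin 3 → ℝ) → Fin 3 → ℂ) (x : Fin 3 → ℝ) : ℂ :=
  pd3 0 (fun y => F y 0) x + pd3 1 (fun y => F y 1) x + pd3 2 (fun y => F y 2) x

/-- The Laplacian of a scalar function `α : ℝ³ → ℂ`. -/
noncomputable def lap (α : (Fin 3 → ℝ) → ℂ) (x : Fin 3 → ℝ) : ℂ :=
  pd3 0 (pd3 0 α) x + pd3 1 (pd3 1 α) x + pd3 2 (pd3 2 α) x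

/-- `f` is twice differentiable at every point of `U`
(both `f` and its Fréchet derivative are differentiable there). -/
def TwiceDiffOn {E' : Type*} [NormedAddCommGroup E'] [NormedSpace ℝ E']
    (f : (Fin 3 → ℝ) → E') (U : Set (Fin 3 → ℝ)) : Prop :=
  (∀ x ∈ U, DifferentiableAt ℝ f x) ∧ (∀ x ∈ U, DifferentiableAt ℝ (fderiv ℝ f) x)

/-!
Taking the divergence of `curl E + ∇α = iωB + K` at a point of `U`: the term `div curl E`
vanishes because the mixed second partials of `E` commute (Schwarz), `div ∇α` is `Δα`, and the
right-hand side is `iω div B + div K = iωk + div K = 0`.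
-/

open Filter Topology

theorem IsSymmSndFDerivAt.of_eventually_differentiableAt {E F : Type*} [NormedAddCommGroup E]
    [NormedSpace ℝ E] [NormedAddCommGroup F] [NormedSpace ℝ F] {f : E → F} {x : E}
    (hf : ∀ᶠ y in 𝓝 x, DifferentiableAt ℝ f y) (hf' : DifferentiableAt ℝ (fderiv ℝ f) x) :
    IsSymmSndFDerivAt ℝ f x :=
  second_derivative_symmetric_of_eventually (hf.mono fun _ hy => hy.hasFDerivAt) hf'.hasFDerivAt

noncomputable def vgrad (α : (Fin 3 → ℝ) → ℂ) (x : Fin 3 → ℝ) : Fin 3 → ℂ :=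
  fun i => pd3 i α x

section
variable {x : Fin 3 → ℝ}

theorem Filter.EventuallyEq.pd3_eq {f g : (Fin 3 → ℝ) → ℂ} (h : f =ᶠ[𝓝 x] g) (i : Fin 3) :
    pd3 i f x = pd3 i g x := by
  rw [pd3, pd3, h.fderiv_eq]

theorem pd3_apply {F : (Fin 3 → ℝ) → Fin 3 → ℂ} (hF : DifferentiableAt ℝ F x) (i j : Fin 3) :
    pd3 i (fun y => F y j) x = fderiv ℝ F x (Pi.single i 1) j := by
  rw [pd3, fderiv_apply hF j]
  rfl

theorem pd3_sub {f g : (Fin 3 → ℝ) → ℂ} (hf : DifferentiableAt ℝ f x)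
    (hg : DifferentiableAt ℝ g x) (i : Fin 3) :
    pd3 i (fun y => f y - g y) x = pd3 i f x - pd3 i g x := by
  rw [pd3, fderiv_fun_sub hf hg]
  rfl

theorem differentiableAt_pd3 {f : (Fin 3 → ℝ) → ℂ} (hf : DifferentiableAt ℝ (fderiv ℝ f) x)
    (i : Fin 3) : DifferentiableAt ℝ (pd3 i f) x :=
  hf.clm_apply (differentiableAt_const _)

theorem pd3_pd3 {f : (Fin 3 → ℝ) → ℂ} (hf : DifferentiableAt ℝ (fderiv ℝ f) x) (i j : Fin 3) :
    pd3 i (pd3 j f) x = fderiv ℝ (fderiv ℝ f) x (Pi.single i 1) (Pi.single j 1) := by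
  have : pd3 j f = fun y => fderiv ℝ f y (Pi.single j 1) := rfl
  rw [pd3, this, fderiv_clm_apply hf (differentiableAt_const _)]
  simp

theorem pd3_pd3_comm {f : (Fin 3 → ℝ) → ℂ} (hf : ∀ᶠ y in 𝓝 x, DifferentiableAt ℝ f y)
    (hf' : DifferentiableAt ℝ (fderiv ℝ f) x) (i j : Fin 3) :
    pd3 i (pd3 j f) x = pd3 j (pd3 i f) x := by
  rw [pd3_pd3 hf', pd3_pd3 hf', (IsSymmSndFDerivAt.of_eventually_differentiableAt hf hf').eq]

theorem differentiableAt_fderiv_apply {F : (Fin 3 → ℝ) → Fin 3 → ℂ}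
    (hF : ∀ᶠ y in 𝓝 x, DifferentiableAt ℝ F y) (hF' : DifferentiableAt ℝ (fderiv ℝ F) x)
    (k : Fin 3) : DifferentiableAt ℝ (fderiv ℝ fun y => F y k) x :=
  ((differentiableAt_const (ContinuousLinearMap.proj k)).clm_comp hF').congr_of_eventuallyEq
    (hF.mono fun _ hy => fderiv_apply hy k)

theorem vdiv_add {F G : (Fin 3 → ℝ) → Fin 3 → ℂ} (hF : DifferentiableAt ℝ F x)
    (hG : DifferentiableAt ℝ G x) : vdiv (F + G) x = vdiv F x + vdiv G x := by
  simp only [vdiv, pd3_apply (hF.add hG), pd3_apply hF, pd3_apply hG, fderiv_add hF hG]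
  simp only [add_apply, Pi.add_apply]
  ring

theorem vdiv_const_smul {F : (Fin 3 → ℝ) → Fin 3 → ℂ} (hF : DifferentiableAt ℝ F x) (c : ℂ) :
    vdiv (c • F) x = c * vdiv F x := by
  simp only [vdiv, pd3_apply (hF.const_smul c), pd3_apply hF, fderiv_const_smul hF c]
  simp only [smul_apply, Pi.smul_apply, smul_eq_mul]
  ring

theorem Filter.EventuallyEq.vdiv_eq {F G : (Fin 3 → ℝ) → Fin 3 → ℂ} (h : F =ᶠ[𝓝 x] G) :
    vdiv F x = vdiv G x := by
  have hk (k : Fin 3) : (fun y => F y k) =ᶠ[𝓝 x] fun y => G y k := h.mono fun _ hy => congrFun hy k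
  rw [vdiv, vdiv, (hk 0).pd3_eq, (hk 1).pd3_eq, (hk 2).pd3_eq]

theorem vdiv_vgrad (α : (Fin 3 → ℝ) → ℂ) : vdiv (vgrad α) x = lap α x := rfl

theorem differentiableAt_vgrad {α : (Fin 3 → ℝ) → ℂ} (hα : DifferentiableAt ℝ (fderiv ℝ α) x) :
    DifferentiableAt ℝ (vgrad α) x :=
  differentiableAt_pi.2 (differentiableAt_pd3 hα)

section curl
variable {F : (Fin 3 → ℝ) → Fin 3 → ℂ}

theorem differentiableAt_pd3_apply (hF : ∀ᶠ y in 𝓝 x, DifferentiableAt ℝ F y)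
    (hF' : DifferentiableAt ℝ (fderiv ℝ F) x) (j k : Fin 3) :
    DifferentiableAt ℝ (pd3 j fun y => F y k) x :=
  differentiableAt_pd3 (differentiableAt_fderiv_apply hF hF' k) j

theorem differentiableAt_vcurl (hF : ∀ᶠ y in 𝓝 x, DifferentiableAt ℝ F y)
    (hF' : DifferentiableAt ℝ (fderiv ℝ F) x) :
    DifferentiableAt ℝ (vcurl F) x := by
  have hd := differentiableAt_pd3_apply hF hF'
  refine differentiableAt_pi.2 fun i => ?_
  fin_cases i <;> exact (hd _ _).sub (hd _ _)

theorem vdiv_vcurl (hF : ∀ᶠ y in 𝓝 x, DifferentiableAt ℝ F y)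
    (hF' : DifferentiableAt ℝ (fderiv ℝ F) x) :
    vdiv (vcurl F) x = 0 := by
  have hd := differentiableAt_pd3_apply hF hF'
  have hc i j k : pd3 i (pd3 j fun y => F y k) x = pd3 j (pd3 i fun y => F y k) x :=
    pd3_pd3_comm (hF.mono fun _ hy => differentiableAt_pi.1 hy k)
      (differentiableAt_fderiv_apply hF hF' k) i j
  simp only [vdiv, vcurl, Matrix.cons_val]
  rw [pd3_sub (hd _ _) (hd _ _), pd3_sub (hd _ _) (hd _ _), pd3_sub (hd _ _) (hd _ _),
    hc 0 1 2, hc 0 2 1, hc 1 2 0]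
  ring
end curl
end

/-- Classical interior form of the key step in the proofs of Theorems 3.2(ii) and
4.3(ii): if `curl E + ∇α = iωB + K`, `div B = k` and `iωk = -div K` on `U`, then the
auxiliary scalar `α` is harmonic on `U`. -/
theorem auxiliary_scalar_harmonic
    (U : Set (Fin 3 → ℝ)) (hU : IsOpen U) (ω : ℂ)
    (E B K : (Fin 3 → ℝ) → Fin 3 → ℂ) (α k : (Fin 3 → ℝ) → ℂ)
    (hE : TwiceDiffOn E U) (hα : TwiceDiffOn α U)
    (hB : ∀ x ∈ U, DifferentiableAt ℝ B x)
    (hK : ∀ x ∈ U, DifferentiableAt ℝ K x)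
    (h1 : ∀ x ∈ U, ∀ i, vcurl E x i + pd3 i α x = I * ω * B x i + K x i)
    (h2 : ∀ x ∈ U, vdiv B x = k x)
    (h3 : ∀ x ∈ U, I * ω * k x = -vdiv K x) :
    ∀ x ∈ U, lap α x = 0 := by
  intro x hx
  have hE_near : ∀ᶠ y in 𝓝 x, DifferentiableAt ℝ E y :=
    mem_of_superset (hU.mem_nhds hx) hE.1
  have hcurl := differentiableAt_vcurl hE_near (hE.2 x hx)
  have hgrad := differentiableAt_vgrad (hα.2 x hx)
  have heq : vcurl E + vgrad α =ᶠ[𝓝 x] (I * ω) • B + K :=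
    mem_of_superset (hU.mem_nhds hx) fun y hy => funext (h1 y hy)
  calc lap α x = vdiv (vcurl E) x + vdiv (vgrad α) x := by
        rw [vdiv_vcurl hE_near (hE.2 x hx), vdiv_vgrad, zero_add]
    _ = vdiv ((I * ω) • B + K) x := by rw [← vdiv_add hcurl hgrad, heq.vdiv_eq]
    _ = 0 := by
        rw [vdiv_add ((hB x hx).const_smul _) (hK x hx), vdiv_const_smul (hB x hx), h2 x hx,
          h3 x hx, neg_add_cancel]
end

section
/- Let U ⊆ ℝ³ be open and ω ∈ ℂ. Let E⁺, B⁺ : U → ℂ³ and α⁺ : U → ℂ be continuously differentiable on U with curl E⁺ + ∇α⁺ = iωB⁺ on U ∩ {x₃ > 0}, and let E⁻, B⁻ : U → ℂ³ and α⁻ : U → ℂ be continuously differentiable on U with curl E⁻ + ∇α⁻ = iωB⁻ on U ∩ {x₃ < 0}. Suppose that on U ∩ {x₃ = 0} one has E⁺₁ = E⁻₁, E⁺₂ = E⁻₂ (continuity of the tangential components of E) and B⁺₃ = B⁻₃ (continuity of the normal component of B). Then ∂₃α⁺ = ∂₃α⁻ at every point of U ∩ {x₃ = 0}. (Flat-interface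 classical form of the step ⟦∂α/∂n⟧ = 0 in the proof of Theorem 3.2(ii): the normal derivative of the auxiliary scalar α has no jump across the interface.) -/
open Complex

/-!
Only the third component of `curl E± + ∇α± = iωB±` is needed. By continuity it holds on the
interface from both sides, and there `(curl E)₃ = ∂₁E₂ - ∂₂E₁` involves only derivatives of
`E₁, E₂` along the interface, which agree on the two sides because `E₁, E₂` do. Subtracting
the two equations and using `B⁺₃ = B⁻₃` leaves `∂₃α⁺ = ∂₃α⁻`.
-/

open Set Filter Topology

theorem Set.EqOn.inter_closure_of_isOpen {X Y : Type*} [TopologicalSpace X] [TopologicalSpace Y]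
    [T2Space Y] {U s : Set X} {f g : X → Y} (hU : IsOpen U) (hf : ContinuousOn f U)
    (hg : ContinuousOn g U) (h : EqOn f g (U ∩ s)) : EqOn f g (U ∩ closure s) :=
  h.of_subset_closure (hf.mono inter_subset_left) (hg.mono inter_subset_left)
    (inter_subset_inter_right U subset_closure) hU.inter_closure

theorem closure_setOf_lt_apply {ι : Type*} (i : ι) (a : ℝ) :
    closure {y : ι → ℝ | a < y i} = {y | a ≤ y i} :=
  ((isOpenMap_eval (X := fun _ : ι => ℝ) i).preimage_closure_eq_closure_preimage
    (continuous_apply i) (Ioi a)).symm.trans (congrArg _ (closure_Ioi a))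

theorem closure_setOf_apply_lt {ι : Type*} (i : ι) (a : ℝ) :
    closure {y : ι → ℝ | y i < a} = {y | y i ≤ a} :=
  ((isOpenMap_eval (X := fun _ : ι => ℝ) i).preimage_closure_eq_closure_preimage
    (continuous_apply i) (Iio a)).symm.trans (congrArg _ (closure_Iio a))

theorem fderiv_apply_eq_of_eventuallyEq_line {𝕜 E F : Type*} [NontriviallyNormedField 𝕜]
    [NormedAddCommGroup E] [NormedSpace 𝕜 E] [NormedAddCommGroup F] [NormedSpace 𝕜 F]
    {f g : E → F} {x v : E} (hf : DifferentiableAt 𝕜 f x) (hg : DifferentiableAt 𝕜 g x)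
    (h : (fun t : 𝕜 => f (x + t • v)) =ᶠ[𝓝 0] fun t => g (x + t • v)) :
    fderiv 𝕜 f x v = fderiv 𝕜 g x v := by
  rw [← hf.lineDeriv_eq_fderiv, ← hg.lineDeriv_eq_fderiv]
  exact h.deriv_eq

theorem pd3_eq_of_eqOn_hyperplane {U : Set (Fin 3 → ℝ)} (hU : IsOpen U) {f g : (Fin 3 → ℝ) → ℂ}
    {i j : Fin 3} (hij : i ≠ j) {c : ℝ} (hfg : EqOn f g (U ∩ {y | y i = c}))
    {x : Fin 3 → ℝ} (hx : x ∈ U) (hxc : x i = c)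
    (hf : DifferentiableAt ℝ f x) (hg : DifferentiableAt ℝ g x) :
    pd3 j f x = pd3 j g x := by
  refine fderiv_apply_eq_of_eventuallyEq_line hf hg ?_
  have hline : Tendsto (fun t : ℝ => x + t • Pi.single j 1) (𝓝 0) (𝓝 x) := by
    simpa using ((continuous_id.smul continuous_const).const_add x).tendsto (0 : ℝ)
  filter_upwards [hline (hU.mem_nhds hx)] with t ht
  exact hfg ⟨ht, by simp [hxc, hij]⟩

theorem ContDiffOn.continuousOn_pd3 {U : Set (Fin 3 → ℝ)} (hU : IsOpen U)
    {f : (Fin 3 → ℝ) → ℂ} (hf : ContDiffOn ℝ 1 f U) (i : Fin 3) : ContinuousOn (pd3 i f) U :=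
  (hf.continuousOn_fderiv_of_isOpen hU le_rfl).clm_apply continuousOn_const

theorem ContDiffOn.continuousOn_vcurl {U : Set (Fin 3 → ℝ)} (hU : IsOpen U)
    {F : (Fin 3 → ℝ) → Fin 3 → ℂ} (hF : ContDiffOn ℝ 1 F U) (i : Fin 3) :
    ContinuousOn (fun x => vcurl F x i) U := by
  have hc (k l : Fin 3) := (contDiffOn_pi.mp hF k).continuousOn_pd3 hU l
  fin_cases i
  · exact (hc 2 1).sub (hc 1 2)
  · exact (hc 0 2).sub (hc 2 0)
  · exact (hc 1 0).sub (hc 0 1)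

theorem eqOn_vcurl_add_pd3_inter_closure {U : Set (Fin 3 → ℝ)} (hU : IsOpen U)
    {F B : (Fin 3 → ℝ) → Fin 3 → ℂ} {α : (Fin 3 → ℝ) → ℂ}
    (hF : ContDiffOn ℝ 1 F U) (hB : ContDiffOn ℝ 1 B U) (hα : ContDiffOn ℝ 1 α U) (ω : ℂ)
    (i : Fin 3) {s : Set (Fin 3 → ℝ)}
    (h : EqOn (fun x => vcurl F x i + pd3 i α x) (fun x => I * ω * B x i) (U ∩ s)) :
    EqOn (fun x => vcurl F x i + pd3 i α x) (fun x => I * ω * B x i) (U ∩ closure s) :=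
  h.inter_closure_of_isOpen hU ((hF.continuousOn_vcurl hU i).add (hα.continuousOn_pd3 hU i))
    (continuousOn_const.mul (contDiffOn_pi.mp hB i).continuousOn)

theorem vcurl_two (F : (Fin 3 → ℝ) → Fin 3 → ℂ) (x : Fin 3 → ℝ) :
    vcurl F x 2 = pd3 0 (fun y => F y 1) x - pd3 1 (fun y => F y 0) x :=
  rfl

/-- Flat-interface classical form of the step `⟦∂α/∂n⟧ = 0` in the proof of Theorem
3.2(ii): if `curl E± + ∇α± = iωB±` on the two sides of `{x₃ = 0}` and on the interface
the tangential components of `E` and the normal component of `B` are continuous, then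
the normal derivative of the auxiliary scalar `α` has no jump across the interface. -/
theorem normal_derivative_alpha_no_jump
    (U : Set (Fin 3 → ℝ)) (hU : IsOpen U) (ω : ℂ)
    (Ep Bp Em Bm : (Fin 3 → ℝ) → Fin 3 → ℂ) (αp αm : (Fin 3 → ℝ) → ℂ)
    (hEp : ContDiffOn ℝ 1 Ep U) (hBp : ContDiffOn ℝ 1 Bp U) (hαp : ContDiffOn ℝ 1 αp U)
    (hEm : ContDiffOn ℝ 1 Em U) (hBm : ContDiffOn ℝ 1 Bm U) (hαm : ContDiffOn ℝ 1 αm U)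
    (hp : ∀ x ∈ U, x 2 > 0 → ∀ i, vcurl Ep x i + pd3 i αp x = I * ω * Bp x i)
    (hm : ∀ x ∈ U, x 2 < 0 → ∀ i, vcurl Em x i + pd3 i αm x = I * ω * Bm x i)
    (hint : ∀ x ∈ U, x 2 = 0 →
      Ep x 0 = Em x 0 ∧ Ep x 1 = Em x 1 ∧ Bp x 2 = Bm x 2) :
    ∀ x ∈ U, x 2 = 0 → pd3 2 αp x = pd3 2 αm x := by
  intro x hx hx2
  have hplus := eqOn_vcurl_add_pd3_inter_closure hU hEp hBp hαp ω 2 (s := {y | 0 < y 2})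
    (fun y hy => hp y hy.1 hy.2 2) ⟨hx, by simp [closure_setOf_lt_apply, hx2]⟩
  have hminus := eqOn_vcurl_add_pd3_inter_closure hU hEm hBm hαm ω 2 (s := {y | y 2 < 0})
    (fun y hy => hm y hy.1 hy.2 2) ⟨hx, by simp [closure_setOf_apply_lt, hx2]⟩
  have hdiff {f : (Fin 3 → ℝ) → ℂ} (hf : ContDiffOn ℝ 1 f U) : DifferentiableAt ℝ f x :=
    (hf.differentiableOn one_ne_zero).differentiableAt (hU.mem_nhds hx)
  have h₀ := pd3_eq_of_eqOn_hyperplane hU (j := 0) (by decide)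
    (fun y hy => (hint y hy.1 hy.2).2.1) hx hx2
    (hdiff (contDiffOn_pi.mp hEp 1)) (hdiff (contDiffOn_pi.mp hEm 1))
  have h₁ := pd3_eq_of_eqOn_hyperplane hU (j := 1) (by decide)
    (fun y hy => (hint y hy.1 hy.2).1) hx hx2
    (hdiff (contDiffOn_pi.mp hEp 0)) (hdiff (contDiffOn_pi.mp hEm 0))
  obtain ⟨-, -, hB⟩ := hint x hx hx2
  simp only [vcurl_two] at hplus hminus
  linear_combination hplus - hminus - h₀ + h₁ + I * ω * hB
end
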